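/- No physical rebound, vanishing viscosity limit before contact (Theorem 3.2(i)): Assume (B1), (B2), (D1), (D2) and b(0) = 0. Take initial data ξ₀ = ξ̇₀ = 0, h₀ > 0, ḣ₀ < 0, and set t₀ := −h₀/ḣ₀ and H(t) := max{0, h₀ + ḣ₀·t}. For μ > 0 let (h_μ, ξ_μ) denote the unique global solution of (gf). Then, as μ → 0⁺, h_μ → H and ξ_μ → 0 uniformly on [0, t₀]. -/

import Mathlib

open Real Filter Set MeasureTheory Metric

noncomputable section

/-- The potential `B(y) = ∫₀^y b(w) dw` of the elastic response `b`. -/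
def potB (b : ℝ → ℝ) (y : ℝ) : ℝ := ∫ w in (0:ℝ)..y, b w

/-- (B1): `b` is locally Lipschitz continuous. -/
def HypB1 (b : ℝ → ℝ) : Prop := LocallyLipschitz b

/-- (B2): the potential `B` is coercive, i.e. `B(y) → ∞` as `|y| → ∞`. -/
def HypB2 (b : ℝ → ℝ) : Prop := Tendsto (potB b) (cocompact ℝ) atTop

/-- (B3): the potential `B` is nonnegative. -/
def HypB3 (b : ℝ → ℝ) : Prop := ∀ y : ℝ, 0 ≤ potB b y

/-- (B4): `b(y)·y > 0` for all `y ≠ 0`. -/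
def HypB4 (b : ℝ → ℝ) : Prop := ∀ y : ℝ, y ≠ 0 → 0 < b y * y

/-- The drag factor `𝒟` maps `(0,∞) × ℝ` into `(0,∞)`. -/
def HypDpos (D : ℝ → ℝ → ℝ) : Prop := ∀ x ξ : ℝ, 0 < x → 0 < D x ξ

/-- (D1): `𝒟` is locally Lipschitz continuous on `(0,∞) × ℝ`. -/
def HypD1 (D : ℝ → ℝ → ℝ) : Prop :=
  ∀ p : ℝ × ℝ, 0 < p.1 → ∃ ε > 0, ∃ L : NNReal,
    LipschitzOnWith L (fun q : ℝ × ℝ => D q.1 q.2)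
      (Metric.ball p ε ∩ {q : ℝ × ℝ | 0 < q.1})

/-- (D2): singular lower bound `𝒟(h,ξ) ≥ c·h^(−α)`, uniformly in `ξ`. -/
def HypD2 (D : ℝ → ℝ → ℝ) (c α : ℝ) : Prop :=
  0 < c ∧ 1 ≤ α ∧ ∀ x ξ : ℝ, 0 < x → c * x ^ (-α) ≤ D x ξ

/-- (D3): `𝒟(h,ξ) = g(h)·h^(−α)` with `g : (0,∞) → [C₁,C₂]` locally Lipschitz. -/
def HypD3 (D : ℝ → ℝ → ℝ) (g : ℝ → ℝ) (C₁ C₂ α : ℝ) : Prop :=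
  0 < C₁ ∧ C₁ ≤ C₂ ∧ 1 ≤ α ∧
  (∀ x : ℝ, 0 < x → ∃ ε > 0, ∃ L : NNReal,
      LipschitzOnWith L g (Metric.ball x ε ∩ Set.Ioi 0)) ∧
  (∀ x : ℝ, 0 < x → g x ∈ Set.Icc C₁ C₂) ∧
  (∀ x ξ : ℝ, 0 < x → D x ξ = g x * x ^ (-α))

/-- (D4): `ξ ↦ 𝒟(h,ξ)` is nondecreasing for every `h > 0`. -/
def HypD4 (D : ℝ → ℝ → ℝ) : Prop :=
  ∀ x : ℝ, 0 < x → ∀ ξ₁ ξ₂ : ℝ, ξ₁ ≤ ξ₂ → D x ξ₁ ≤ D x ξ₂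

/-- (D5): `𝒟(h,−δ₁) ≥ c₁·h^(−γ₁)` with `γ₁ ≥ α`. -/
def HypD5 (D : ℝ → ℝ → ℝ) (α δ₁ c₁ γ₁ : ℝ) : Prop :=
  0 < δ₁ ∧ 0 < c₁ ∧ α ≤ γ₁ ∧ ∀ x : ℝ, 0 < x → c₁ * x ^ (-γ₁) ≤ D x (-δ₁)

/-- (D6): `𝒟(h,−δ₂) ≤ γ(h)·h^(−γ₁)` with `∫₀^h γ(y)/y dy → 0` as `h → 0⁺`. -/
def HypD6 (D : ℝ → ℝ → ℝ) (γ₁ δ₂ : ℝ) (γfun : ℝ → ℝ) : Prop :=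
  0 < δ₂ ∧ (∀ y : ℝ, 0 < y → 0 ≤ γfun y) ∧
  Tendsto (fun x : ℝ => ∫ y in (0:ℝ)..x, γfun y / y)
    (nhdsWithin 0 (Set.Ioi 0)) (nhds 0) ∧
  ∀ x : ℝ, 0 < x → D x (-δ₂) ≤ γfun x * x ^ (-γ₁)

/-- A global solution of the reduced system (gf) on `[0,∞)`:
`h, ξ` twice differentiable, `h > 0`, satisfying
`ḧ − ξ̈ = a·b(ξ)` and `ḧ = −b(ξ) − μ·𝒟(h,ξ)·ḣ`, with the given initial data. -/
def IsGlobalSolution (a μ : ℝ) (b : ℝ → ℝ) (D : ℝ → ℝ → ℝ)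
    (h0 hd0 ξ0 ξd0 : ℝ) (h ξ : ℝ → ℝ) : Prop :=
  (∀ t : ℝ, 0 ≤ t → 0 < h t) ∧
  (∀ t : ℝ, 0 ≤ t → DifferentiableAt ℝ h t ∧ DifferentiableAt ℝ (deriv h) t ∧
    DifferentiableAt ℝ ξ t ∧ DifferentiableAt ℝ (deriv ξ) t) ∧
  (∀ t : ℝ, 0 ≤ t → deriv (deriv h) t - deriv (deriv ξ) t = a * b (ξ t)) ∧
  (∀ t : ℝ, 0 ≤ t →
    deriv (deriv h) t = - b (ξ t) - μ * D (h t) (ξ t) * deriv h t) ∧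
  h 0 = h0 ∧ deriv h 0 = hd0 ∧ ξ 0 = ξ0 ∧ deriv ξ 0 = ξd0

/-- A solution of the nonlinear oscillator `ξ̈ + a·b(ξ) = 0` on `(t₀,∞)`
with `ξ(t₀) = 0` and `ξ̇(t₀) = v₀` (right derivative at `t₀`). -/
def IsOscSolution (a t₀ v₀ : ℝ) (b : ℝ → ℝ) (ψ : ℝ → ℝ) : Prop :=
  ψ t₀ = 0 ∧
  HasDerivWithinAt ψ v₀ (Set.Ici t₀) t₀ ∧
  ContinuousOn ψ (Set.Ici t₀) ∧
  Tendsto (deriv ψ) (nhdsWithin t₀ (Set.Ioi t₀)) (nhds v₀) ∧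
  ∀ t : ℝ, t₀ < t → DifferentiableAt ℝ ψ t ∧ DifferentiableAt ℝ (deriv ψ) t ∧
    deriv (deriv ψ) t + a * b (ψ t) = 0

/-!
The energy `ḣ²/2 + B(ξ) + (ḣ - ξ̇)²/(2a)` is nonincreasing, so `ξ`, `ḣ` and `ξ̇` are bounded
uniformly in `μ`. While `h` stays above a fixed level `ε > 0`, the drag `μ𝒟(h,ξ)ḣ` is `O(μ)`,
and since `b(0) = 0` Grönwall's inequality for `(ξ, ξ̇, ḣ - ḣ₀)` keeps the solution
`O(μ)`-close to the free flight `h₀ + ḣ₀t`, `ξ = 0`. For `T < t₀` and small `μ` this in turn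
keeps `h` above `ε` on `[0, T]`, by continuation. The remaining interval `[T, t₀]` is short,
and there the uniform Lipschitz bounds suffice.
-/

open scoped Topology

theorem abs_sub_affine_le {f : ℝ → ℝ} {m C a x : ℝ} (hax : a ≤ x)
    (hf : ∀ t ∈ Icc a x, DifferentiableAt ℝ f t) (hC : ∀ t ∈ Icc a x, |deriv f t - m| ≤ C) :
    |f x - (f a + m * (x - a))| ≤ C * (x - a) := by
  have hg : ∀ t ∈ Icc a x, HasDerivAt (fun s => f s - m * s) (deriv f t - m) t := fun t ht =>
    (hf t ht).hasDerivAt.sub (by simpa using (hasDerivAt_id t).const_mul m)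
  have := (convex_Icc a x).norm_image_sub_le_of_norm_deriv_le
    (fun t ht => (hg t ht).differentiableAt) (fun t ht => (hg t ht).deriv ▸ hC t ht)
    (left_mem_Icc.2 hax) (right_mem_Icc.2 hax)
  rw [Real.norm_eq_abs, Real.norm_eq_abs, abs_of_nonneg (sub_nonneg.2 hax)] at this
  convert this using 2
  ring

theorem Convex.lipschitzOnWith_of_abs_deriv_le {f : ℝ → ℝ} {s : Set ℝ} {M : ℝ} (hs : Convex ℝ s)
    (hf : ∀ x ∈ s, DifferentiableAt ℝ f x) (hM : ∀ x ∈ s, |deriv f x| ≤ M) :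
    LipschitzOnWith M.toNNReal f s :=
  LipschitzOnWith.of_dist_le' fun x hx y hy => by
    simpa only [Real.dist_eq, Real.norm_eq_abs] using
      hs.norm_image_sub_le_of_norm_deriv_le hf hM hy hx

theorem ContinuousOn.forall_lt_of_continuation {f : ℝ → ℝ} {a b c : ℝ}
    (hf : ContinuousOn f (Icc a b))
    (hstep : ∀ τ ∈ Icc a b, (∀ s ∈ Ico a τ, c < f s) → c < f τ) :
    ∀ t ∈ Icc a b, c < f t := by
  by_contra! hbad
  have hclosed : IsClosed (Icc a b ∩ f ⁻¹' Iic c) :=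
    hf.preimage_isClosed_of_isClosed isClosed_Icc isClosed_Iic
  obtain ⟨τ, ⟨hτ, hfτ⟩, hleast⟩ :=
    (isCompact_Icc.of_isClosed_subset hclosed inter_subset_left).exists_isLeast hbad
  refine (hstep τ hτ fun s hs => lt_of_not_ge fun hfs => ?_).not_ge hfτ
  exact (hleast ⟨⟨hs.1, hs.2.le.trans hτ.2⟩, hfs⟩).not_gt hs.2

theorem tendstoUniformlyOn_of_dist_le {ι α β : Type*} [PseudoMetricSpace β] {l : Filter ι}
    {F : ι → α → β} {g : α → β} {s : Set α} {u : ι → ℝ} (hu : Tendsto u l (𝓝 0))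
    (hF : ∀ᶠ i in l, ∀ x ∈ s, dist (g x) (F i x) ≤ u i) : TendstoUniformlyOn F g l s :=
  Metric.tendstoUniformlyOn_iff.2 fun ε hε => by
    filter_upwards [hF, hu (Iio_mem_nhds hε)] with i hi hui x hx
    exact (hi x hx).trans_lt hui

theorem tendstoUniformlyOn_Icc_of_lipschitzOnWith {ι β : Type*} [PseudoMetricSpace β]
    {l : Filter ι} {F : ι → ℝ → β} {g : ℝ → β} {a b : ℝ} {K K' : NNReal} (hab : a < b)
    (hF : ∀ᶠ i in l, LipschitzOnWith K (F i) (Icc a b)) (hg : LipschitzOnWith K' g (Icc a b))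
    (hT : ∀ T ∈ Ico a b, TendstoUniformlyOn F g l (Icc a T)) :
    TendstoUniformlyOn F g l (Icc a b) := by
  refine Metric.tendstoUniformlyOn_iff.2 fun ε hε => ?_
  set δ := ε / (2 * (K + K' + 1))
  have hδ : (K + K') * δ ≤ ε / 2 := by
    have hδ' : δ * (2 * (K + K' + 1)) = ε := div_mul_cancel₀ _ (by positivity)
    nlinarith [(by positivity : 0 ≤ δ)]
  set T := max a (b - δ)
  have hTab : T ∈ Ico a b :=
    ⟨le_max_left _ _, max_lt hab (by simp only [δ]; linarith [(by positivity : 0 < δ)])⟩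
  have hT' : T ∈ Icc a b := Ico_subset_Icc_self hTab
  filter_upwards [hF, Metric.tendstoUniformlyOn_iff.1 (hT T hTab) (ε / 2) (half_pos hε)]
    with i hFi hi t ht
  rcases le_or_gt t T with htT | hTt
  · exact (hi t ⟨ht.1, htT⟩).trans (half_lt_self hε)
  have htT : dist t T ≤ δ := by
    rw [Real.dist_eq, abs_of_pos (sub_pos.2 hTt)]
    linarith [le_max_right a (b - δ), ht.2]
  have hgt : dist (g t) (g T) ≤ K' * δ :=
    (hg.dist_le_mul t ht T hT').trans (mul_le_mul_of_nonneg_left htT K'.coe_nonneg)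
  have hFt : dist (F i T) (F i t) ≤ K * δ :=
    (hFi.dist_le_mul T hT' t ht).trans (by rw [dist_comm]; gcongr)
  linarith [dist_triangle4 (g t) (g T) (F i T) (F i t), hi T ⟨hT'.1, le_rfl⟩]

theorem gronwallBound_zero_eq_mul (K ε x : ℝ) :
    gronwallBound 0 K ε x = ε * gronwallBound 0 K 1 x := by
  unfold gronwallBound
  split_ifs <;> ring

theorem hasDerivAt_potB {b : ℝ → ℝ} (hb : Continuous b) (y : ℝ) :
    HasDerivAt (potB b) (b y) y :=
  intervalIntegral.integral_hasDerivAt_right (hb.intervalIntegrable 0 y)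
    hb.stronglyMeasurable.stronglyMeasurableAtFilter hb.continuousAt

theorem continuous_potB {b : ℝ → ℝ} (hb : Continuous b) : Continuous (potB b) :=
  continuous_iff_continuousAt.2 fun y => (hasDerivAt_potB hb y).continuousAt

theorem HypB2.exists_abs_le_of_potB_le {b : ℝ → ℝ} (hB2 : HypB2 b) (E : ℝ) :
    ∃ R, ∀ y, potB b y ≤ E → |y| ≤ R := by
  obtain ⟨K, hK, hKE⟩ := hasBasis_cocompact.eventually_iff.1 (hB2.eventually_gt_atTop E)
  obtain ⟨R, hR⟩ := hK.isBounded.exists_norm_le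
  exact ⟨R, fun y hy => hR y (not_not.1 fun hyK => (hKE hyK).not_ge hy)⟩

theorem HypD1.continuousOn {D : ℝ → ℝ → ℝ} (hD1 : HypD1 D) :
    ContinuousOn (fun q : ℝ × ℝ => D q.1 q.2) {q | 0 < q.1} := by
  intro p hp
  obtain ⟨ε, hε, L, hL⟩ := hD1 p hp
  have hopen : IsOpen {q : ℝ × ℝ | 0 < q.1} := isOpen_lt continuous_const continuous_fst
  exact ((hL.continuousOn p ⟨mem_ball_self hε, hp⟩).continuousAt
    (inter_mem (ball_mem_nhds p hε) (hopen.mem_nhds hp))).continuousWithinAt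

def gfEnergy (a : ℝ) (b : ℝ → ℝ) (h ξ : ℝ → ℝ) (t : ℝ) : ℝ :=
  deriv h t ^ 2 / 2 + potB b (ξ t) + (deriv h t - deriv ξ t) ^ 2 / (2 * a)

def freeFlightDeviation (hd0 : ℝ) (h ξ : ℝ → ℝ) (t : ℝ) : ℝ × ℝ × ℝ :=
  (ξ t, deriv ξ t, deriv h t - hd0)

namespace IsGlobalSolution

variable {a μ : ℝ} {b : ℝ → ℝ} {D : ℝ → ℝ → ℝ} {h0 hd0 ξ0 ξd0 : ℝ} {h ξ : ℝ → ℝ}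

theorem differentiableAt_h (hsol : IsGlobalSolution a μ b D h0 hd0 ξ0 ξd0 h ξ) {t : ℝ}
    (ht : 0 ≤ t) : DifferentiableAt ℝ h t :=
  (hsol.2.1 t ht).1

theorem differentiableAt_ξ (hsol : IsGlobalSolution a μ b D h0 hd0 ξ0 ξd0 h ξ) {t : ℝ}
    (ht : 0 ≤ t) : DifferentiableAt ℝ ξ t :=
  (hsol.2.1 t ht).2.2.1

theorem h_zero (hsol : IsGlobalSolution a μ b D h0 hd0 ξ0 ξd0 h ξ) : h 0 = h0 :=
  hsol.2.2.2.2.1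

theorem lipschitzOnWith {M : ℝ} (hsol : IsGlobalSolution a μ b D h0 hd0 ξ0 ξd0 h ξ)
    (hM : ∀ t, 0 ≤ t → |deriv h t| ≤ M ∧ |deriv ξ t| ≤ M) :
    LipschitzOnWith M.toNNReal h (Ici 0) ∧ LipschitzOnWith M.toNNReal ξ (Ici 0) :=
  ⟨(convex_Ici 0).lipschitzOnWith_of_abs_deriv_le (fun _ ht => hsol.differentiableAt_h ht)
      fun t ht => (hM t ht).1,
    (convex_Ici 0).lipschitzOnWith_of_abs_deriv_le (fun _ ht => hsol.differentiableAt_ξ ht)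
      fun t ht => (hM t ht).2⟩

theorem hasDerivAt_gfEnergy (hsol : IsGlobalSolution a μ b D h0 hd0 ξ0 ξd0 h ξ) (ha : a ≠ 0)
    (hb : Continuous b) {t : ℝ} (ht : 0 ≤ t) :
    HasDerivAt (gfEnergy a b h ξ) (-(μ * D (h t) (ξ t) * deriv h t ^ 2)) t := by
  obtain ⟨-, hdiff, hdiffeq, hheq, -⟩ := hsol
  obtain ⟨-, hh', hξ, hξ'⟩ := hdiff t ht
  refine ((((hh'.hasDerivAt.pow 2).div_const 2).add
    ((hasDerivAt_potB hb (ξ t)).comp t hξ.hasDerivAt)).add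
    (((hh'.hasDerivAt.sub hξ'.hasDerivAt).pow 2).div_const (2 * a))).congr_deriv ?_
  have hξ'' : deriv (deriv ξ) t = deriv (deriv h) t - a * b (ξ t) := by
    linarith [hdiffeq t ht]
  simp only [Pi.sub_apply]
  rw [hξ'', hheq t ht]
  field_simp
  ring

theorem gfEnergy_le (hsol : IsGlobalSolution a μ b D h0 hd0 ξ0 ξd0 h ξ) (ha : 0 < a)
    (hμ : 0 ≤ μ) (hb : Continuous b) (hDpos : HypDpos D) {t : ℝ} (ht : 0 ≤ t) :
    gfEnergy a b h ξ t ≤ hd0 ^ 2 / 2 + potB b ξ0 + (hd0 - ξd0) ^ 2 / (2 * a) := by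
  have hderiv := fun s (hs : s ∈ Ici (0 : ℝ)) => hsol.hasDerivAt_gfEnergy ha.ne' hb hs
  have hanti : AntitoneOn (gfEnergy a b h ξ) (Ici 0) := by
    refine antitoneOn_of_deriv_nonpos (convex_Ici 0)
      (fun s hs => (hderiv s hs).continuousAt.continuousWithinAt) ?_ ?_ <;> rw [interior_Ici]
    · exact fun s hs => (hderiv s (mem_Ioi.1 hs).le).differentiableAt.differentiableWithinAt
    · intro s hs
      rw [(hderiv s (mem_Ioi.1 hs).le).deriv, neg_nonpos]
      have := hDpos (h s) (ξ s) (hsol.1 s (mem_Ioi.1 hs).le)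
      positivity
  obtain ⟨-, -, -, -, -, hh'0, hξ0, hξ'0⟩ := hsol
  simpa [gfEnergy, hh'0, hξ0, hξ'0] using hanti (mem_Ici.2 le_rfl) ht ht

theorem norm_freeFlightDeviation_le_gronwallBound
    (hsol : IsGlobalSolution a μ b D h0 hd0 0 0 h ξ) (ha : 0 ≤ a) {Kb η τ : ℝ} (hKb : 0 ≤ Kb)
    (hbξ : ∀ t ∈ Ico 0 τ, |b (ξ t)| ≤ Kb * |ξ t|)
    (hdrag : ∀ t ∈ Ico 0 τ, |μ * D (h t) (ξ t) * deriv h t| ≤ η) :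
    ∀ t ∈ Icc 0 τ,
      ‖freeFlightDeviation hd0 h ξ t‖ ≤ gronwallBound 0 ((1 + a) * Kb + 1) η t := by
  obtain ⟨-, hdiff, hdiffeq, hheq, -, hh'0, hξ0, hξ'0⟩ := hsol
  have hderiv : ∀ t, 0 ≤ t → HasDerivAt (freeFlightDeviation hd0 h ξ)
      (deriv ξ t, deriv (deriv ξ) t, deriv (deriv h) t) t := fun t ht =>
    let ⟨_, hh', hξ, hξ'⟩ := hdiff t ht
    hξ.hasDerivAt.prodMk (hξ'.hasDerivAt.prodMk (hh'.hasDerivAt.sub_const hd0))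
  have hbound : ∀ t ∈ Ico 0 τ, ‖(deriv ξ t, deriv (deriv ξ) t, deriv (deriv h) t)‖ ≤
      ((1 + a) * Kb + 1) * ‖freeFlightDeviation hd0 h ξ t‖ + η := by
    intro t ht
    set n := ‖freeFlightDeviation hd0 h ξ t‖
    have hn : 0 ≤ n := norm_nonneg _
    have hξn : |ξ t| ≤ n := norm_fst_le (freeFlightDeviation hd0 h ξ t)
    have hξ'n : |deriv ξ t| ≤ n :=
      (norm_fst_le (freeFlightDeviation hd0 h ξ t).2).trans (norm_snd_le _)
    have hbn : |b (ξ t)| ≤ Kb * n := (hbξ t ht).trans (by gcongr)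
    have hdr := hdrag t ht
    have hξ'' : deriv (deriv ξ) t = -((1 + a) * b (ξ t)) - μ * D (h t) (ξ t) * deriv h t := by
      linarith [hdiffeq t ht.1, hheq t ht.1]
    have hξ''n := abs_sub (-((1 + a) * b (ξ t))) (μ * D (h t) (ξ t) * deriv h t)
    have hh''n := abs_sub (-b (ξ t)) (μ * D (h t) (ξ t) * deriv h t)
    rw [abs_neg, abs_mul, abs_of_nonneg (by linarith : 0 ≤ 1 + a)] at hξ''n
    rw [abs_neg] at hh''n
    have : (1 + a) * |b (ξ t)| ≤ (1 + a) * (Kb * n) := by gcongr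
    have : 0 ≤ Kb * n := by positivity
    have : 0 ≤ a * Kb * n := by positivity
    have : 0 ≤ |μ * D (h t) (ξ t) * deriv h t| := abs_nonneg _
    simp only [Prod.norm_def, Real.norm_eq_abs]
    rw [hξ'', hheq t ht.1]
    refine max_le ?_ (max_le ?_ ?_) <;> linarith
  have hf0 : ‖freeFlightDeviation hd0 h ξ 0‖ ≤ 0 := by
    simp [freeFlightDeviation, hξ0, hξ'0, hh'0]
  intro t ht
  simpa using norm_le_gronwallBound_of_norm_deriv_right_le
    (fun s hs => (hderiv s hs.1).continuousAt.continuousWithinAt)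
    (fun s hs => (hderiv s hs.1).hasDerivWithinAt) hf0 hbound t ht

variable {M Kb Cb ε T : ℝ}

theorem norm_freeFlightDeviation_le (hsol : IsGlobalSolution a μ b D h0 hd0 0 0 h ξ)
    (ha : 0 ≤ a) (hμ : 0 ≤ μ) (hM : ∀ t, 0 ≤ t → |ξ t| ≤ M ∧ |deriv h t| ≤ M)
    (hKb : 0 ≤ Kb) (hbM : ∀ y, |y| ≤ M → |b y| ≤ Kb * |y|) (hCb : 0 ≤ Cb)
    (hDbox : ∀ x y, ε ≤ x → x ≤ h0 + M * T → |y| ≤ M → |D x y| ≤ Cb)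
    {τ : ℝ} (hτT : τ ≤ T) (hεh : ∀ t ∈ Ico 0 τ, ε ≤ h t) :
    ∀ t ∈ Icc 0 τ, ‖freeFlightDeviation hd0 h ξ t‖ ≤
      gronwallBound 0 ((1 + a) * Kb + 1) (μ * Cb * M) T := by
  have hM0 : 0 ≤ M := (abs_nonneg _).trans (hM 0 le_rfl).1
  have hhT : ∀ t ∈ Ico 0 τ, h t ≤ h0 + M * T := by
    intro t ht
    have := abs_sub_affine_le (m := 0) ht.1 (fun s hs => hsol.differentiableAt_h hs.1)
      fun s hs => by simpa using (hM s hs.1).2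
    rw [hsol.h_zero] at this
    nlinarith [abs_le.1 this, ht.2.trans_le hτT]
  have hdrag : ∀ t ∈ Ico 0 τ, |μ * D (h t) (ξ t) * deriv h t| ≤ μ * Cb * M := by
    intro t ht
    rw [abs_mul, abs_mul, abs_of_nonneg hμ]
    gcongr
    · exact hDbox _ _ (hεh t ht) (hhT t ht) (hM t ht.1).1
    · exact (hM t ht.1).2
  intro t ht
  calc ‖freeFlightDeviation hd0 h ξ t‖
      ≤ gronwallBound 0 ((1 + a) * Kb + 1) (μ * Cb * M) t :=
        hsol.norm_freeFlightDeviation_le_gronwallBound ha hKb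
          (fun s hs => hbM _ (hM s hs.1).1) hdrag t ht
    _ ≤ gronwallBound 0 ((1 + a) * Kb + 1) (μ * Cb * M) T :=
        gronwallBound_mono le_rfl (by positivity) (by positivity) (ht.2.trans hτT)

theorem abs_sub_freeFlight_le (hsol : IsGlobalSolution a μ b D h0 hd0 0 0 h ξ)
    (ha : 0 ≤ a) (hμ : 0 ≤ μ) (hhd0 : hd0 ≤ 0) (hM : ∀ t, 0 ≤ t → |ξ t| ≤ M ∧ |deriv h t| ≤ M)
    (hKb : 0 ≤ Kb) (hbM : ∀ y, |y| ≤ M → |b y| ≤ Kb * |y|) (hCb : 0 ≤ Cb)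
    (hDbox : ∀ x y, ε ≤ x → x ≤ h0 + M * T → |y| ≤ M → |D x y| ≤ Cb)
    (hsmall : ε + T * gronwallBound 0 ((1 + a) * Kb + 1) (μ * Cb * M) T < h0 + hd0 * T) :
    ∀ t ∈ Icc 0 T,
      |h t - (h0 + hd0 * t)| ≤ T * gronwallBound 0 ((1 + a) * Kb + 1) (μ * Cb * M) T ∧
      |ξ t| ≤ gronwallBound 0 ((1 + a) * Kb + 1) (μ * Cb * M) T := by
  set G := gronwallBound 0 ((1 + a) * Kb + 1) (μ * Cb * M) T
  have hlin : ∀ τ ∈ Icc 0 T, (∀ t ∈ Icc 0 τ, ‖freeFlightDeviation hd0 h ξ t‖ ≤ G) →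
      |h τ - (h0 + hd0 * τ)| ≤ T * G := by
    intro τ hτ hτG
    have hG : 0 ≤ G := (norm_nonneg _).trans (hτG 0 (left_mem_Icc.2 hτ.1))
    have := abs_sub_affine_le hτ.1 (fun t ht => hsol.differentiableAt_h ht.1)
      fun t ht => (norm_snd_le _).trans ((norm_snd_le _).trans (hτG t ht))
    rw [hsol.h_zero, sub_zero] at this
    nlinarith [hτ.2]
  have hεh : ∀ t ∈ Icc 0 T, ε < h t := by
    refine ContinuousOn.forall_lt_of_continuation
      (fun t ht => (hsol.differentiableAt_h ht.1).continuousAt.continuousWithinAt)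
      fun τ hτ hεh => ?_
    have := abs_le.1 (hlin τ hτ (hsol.norm_freeFlightDeviation_le ha hμ hM hKb hbM hCb hDbox
      hτ.2 fun t ht => (hεh t ht).le))
    nlinarith [hτ.2]
  have hTG := hsol.norm_freeFlightDeviation_le ha hμ hM hKb hbM hCb hDbox le_rfl
    fun t ht => (hεh t ⟨ht.1, ht.2.le⟩).le
  exact fun t ht => ⟨hlin t ht fun s hs => hTG s ⟨hs.1, hs.2.trans ht.2⟩,
    (norm_fst_le _).trans (hTG t ht)⟩

end IsGlobalSolution

theorem exists_bound_of_isGlobalSolution {a : ℝ} {b : ℝ → ℝ} {D : ℝ → ℝ → ℝ} (ha : 0 < a)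
    (hb : Continuous b) (hB2 : HypB2 b) (hDpos : HypDpos D) (h0 hd0 ξ0 ξd0 : ℝ) :
    ∃ M, 0 ≤ M ∧ ∀ μ h ξ, 0 ≤ μ → IsGlobalSolution a μ b D h0 hd0 ξ0 ξd0 h ξ →
      ∀ t, 0 ≤ t → |ξ t| ≤ M ∧ |deriv h t| ≤ M ∧ |deriv ξ t| ≤ M := by
  set E := hd0 ^ 2 / 2 + potB b ξ0 + (hd0 - ξd0) ^ 2 / (2 * a)
  obtain ⟨R, hR⟩ := hB2.exists_abs_le_of_potB_le E
  obtain ⟨m, hm⟩ :=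
    (isCompact_Icc (a := -R) (b := R)).bddBelow_image (continuous_potB hb).continuousOn
  refine ⟨max R (√(2 * (E - m)) + √(2 * a * (E - m))), le_max_of_le_right (by positivity), ?_⟩
  intro μ h ξ hμ hsol t ht
  have hE : gfEnergy a b h ξ t ≤ E := hsol.gfEnergy_le ha hμ hb hDpos ht
  unfold gfEnergy at hE
  have hsq : 0 ≤ (deriv h t - deriv ξ t) ^ 2 / (2 * a) := by positivity
  have hξ : |ξ t| ≤ R := hR _ (by linarith [sq_nonneg (deriv h t)])
  have hmξ : m ≤ potB b (ξ t) := hm ⟨ξ t, abs_le.1 hξ, rfl⟩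
  have hh' : |deriv h t| ≤ √(2 * (E - m)) := Real.abs_le_sqrt (by linarith)
  have hhξ' : |deriv h t - deriv ξ t| ≤ √(2 * a * (E - m)) := by
    refine Real.abs_le_sqrt ?_
    have : (deriv h t - deriv ξ t) ^ 2 / (2 * a) ≤ E - m := by linarith [sq_nonneg (deriv h t)]
    rwa [div_le_iff₀ (by positivity), mul_comm] at this
  refine ⟨hξ.trans (le_max_left _ _), ?_, ?_⟩ <;> refine le_trans ?_ (le_max_right _ _)
  · linarith [Real.sqrt_nonneg (2 * a * (E - m))]
  · have := abs_sub (deriv h t) (deriv h t - deriv ξ t)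
    rw [sub_sub_cancel] at this
    linarith

theorem tendstoUniformlyOn_freeFlight {a h0 hd0 T : ℝ} {b : ℝ → ℝ} {D : ℝ → ℝ → ℝ}
    {h ξ : ℝ → ℝ → ℝ} (ha : 0 < a) (hhd0 : hd0 ≤ 0) (hb0 : b 0 = 0) (hB1 : HypB1 b)
    (hB2 : HypB2 b) (hDpos : HypDpos D) (hD1 : HypD1 D)
    (hsol : ∀ μ, 0 < μ → IsGlobalSolution a μ b D h0 hd0 0 0 (h μ) (ξ μ))
    (hT0 : 0 ≤ T) (hT : 0 < h0 + hd0 * T) :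
    TendstoUniformlyOn h (fun t => h0 + hd0 * t) (𝓝[>] 0) (Icc 0 T) ∧
      TendstoUniformlyOn ξ (fun _ => 0) (𝓝[>] 0) (Icc 0 T) := by
  obtain ⟨M, hM0, hM⟩ := exists_bound_of_isGlobalSolution ha hB1.continuous hB2 hDpos h0 hd0 0 0
  obtain ⟨Kb, hKb⟩ := hB1.locallyLipschitzOn.exists_lipschitzOnWith_of_compact
    (isCompact_Icc (a := -M) (b := M))
  have hbM : ∀ y, |y| ≤ M → |b y| ≤ Kb * |y| := fun y hy => by
    simpa [Real.dist_eq, hb0] using hKb.dist_le_mul y (abs_le.1 hy) 0 ⟨by linarith, hM0⟩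
  set ε := (h0 + hd0 * T) / 2 with hε
  have hbox : Icc ε (h0 + M * T) ×ˢ Icc (-M) M ⊆ {q : ℝ × ℝ | 0 < q.1} :=
    fun q hq => (half_pos hT).trans_le hq.1.1
  obtain ⟨Cb, hCb⟩ := (isCompact_Icc.prod isCompact_Icc).exists_bound_of_continuousOn
    (hD1.continuousOn.mono hbox)
  have hDbox : ∀ x y, ε ≤ x → x ≤ h0 + M * T → |y| ≤ M → |D x y| ≤ Cb :=
    fun x y hx₁ hx₂ hy => hCb (x, y) ⟨⟨hx₁, hx₂⟩, abs_le.1 hy⟩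
  have hCb0 : 0 ≤ Cb := (abs_nonneg _).trans
    (hDbox h0 0 (by nlinarith [mul_nonpos_of_nonpos_of_nonneg hhd0 hT0])
      (by nlinarith [mul_nonneg hM0 hT0]) (by simpa using hM0))
  set C := Cb * M * gronwallBound 0 ((1 + a) * Kb + 1) 1 T
  have hG : ∀ μ, gronwallBound 0 ((1 + a) * Kb + 1) (μ * Cb * M) T = μ * C := fun μ => by
    rw [gronwallBound_zero_eq_mul]; ring
  have hC : Tendsto (fun μ => μ * C) (𝓝[>] 0) (𝓝 0) := by
    simpa using ((continuous_mul_const C).tendsto 0).mono_left nhdsWithin_le_nhds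
  have hsmall : ∀ᶠ μ in 𝓝[>] 0, ε + T * (μ * C) < h0 + hd0 * T :=
    (tendsto_const_nhds.add (hC.const_mul T)).eventually
      (gt_mem_nhds (by rw [mul_zero, add_zero]; linarith))
  have hest : ∀ᶠ μ in 𝓝[>] 0, ∀ t ∈ Icc 0 T,
      |h μ t - (h0 + hd0 * t)| ≤ T * (μ * C) ∧ |ξ μ t| ≤ μ * C := by
    filter_upwards [self_mem_nhdsWithin, hsmall] with μ hμ hμs
    simpa only [hG] using (hsol μ hμ).abs_sub_freeFlight_le ha.le hμ.le hhd0
      (fun t ht => (hM μ _ _ hμ.le (hsol μ hμ) t ht).imp_right And.left) Kb.coe_nonneg hbM hCb0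
      hDbox (by rwa [hG])
  constructor
  · refine tendstoUniformlyOn_of_dist_le (by simpa using hC.const_mul T) ?_
    filter_upwards [hest] with μ hμ t ht
    rw [Real.dist_eq, abs_sub_comm]
    exact (hμ t ht).1
  · refine tendstoUniformlyOn_of_dist_le hC ?_
    filter_upwards [hest] with μ hμ t ht
    rw [Real.dist_eq, zero_sub, abs_neg]
    exact (hμ t ht).2

theorem no_physical_rebound_before_contact_general
    (a h0 hd0 : ℝ) (b : ℝ → ℝ) (D : ℝ → ℝ → ℝ)
    (h ξ : ℝ → ℝ → ℝ)
    (ha : 0 < a) (hh0 : 0 < h0) (hhd0 : hd0 < 0)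
    (hb0 : b 0 = 0)
    (hB1 : HypB1 b) (hB2 : HypB2 b)
    (hDpos : HypDpos D) (hD1 : HypD1 D)
    (hsol : ∀ μ : ℝ, 0 < μ →
      IsGlobalSolution a μ b D h0 hd0 0 0 (h μ) (ξ μ)) :
    TendstoUniformlyOn (fun μ t => h μ t) (fun t => max 0 (h0 + hd0 * t))
      (nhdsWithin 0 (Set.Ioi 0)) (Set.Icc 0 (-h0 / hd0)) ∧
    TendstoUniformlyOn (fun μ t => ξ μ t) (fun _ => 0)
      (nhdsWithin 0 (Set.Ioi 0)) (Set.Icc 0 (-h0 / hd0)) := by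
  have ht₀ : 0 < -h0 / hd0 := div_pos_of_neg_of_neg (neg_neg_of_pos hh0) hhd0
  have hfree T (hT : T ∈ Ico 0 (-h0 / hd0)) :=
    tendstoUniformlyOn_freeFlight ha hhd0.le hb0 hB1 hB2 hDpos hD1 hsol hT.1
      (by linarith [(lt_div_iff_of_neg hhd0).1 hT.2])
  have hcontact : EqOn (fun t => h0 + hd0 * t) (fun t => max 0 (h0 + hd0 * t))
      (Icc 0 (-h0 / hd0)) := fun t ht =>
    (max_eq_right (by linarith [(le_div_iff_of_neg hhd0).1 ht.2])).symm
  obtain ⟨M, -, hM⟩ := exists_bound_of_isGlobalSolution ha hB1.continuous hB2 hDpos h0 hd0 0 0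
  have hLip : ∀ᶠ μ in 𝓝[>] 0, LipschitzOnWith M.toNNReal (h μ) (Icc 0 (-h0 / hd0)) ∧
      LipschitzOnWith M.toNNReal (ξ μ) (Icc 0 (-h0 / hd0)) := by
    filter_upwards [self_mem_nhdsWithin] with μ hμ
    exact ((hsol μ hμ).lipschitzOnWith fun t ht => (hM μ _ _ hμ.le (hsol μ hμ) t ht).2).imp
      (·.mono Icc_subset_Ici_self) (·.mono Icc_subset_Ici_self)
  have hlinLip : LipschitzWith ‖hd0‖₊ fun t => h0 + hd0 * t :=
    LipschitzWith.of_dist_le_mul fun x y => by simp [Real.dist_eq, ← mul_sub, abs_mul]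
  exact ⟨(tendstoUniformlyOn_Icc_of_lipschitzOnWith ht₀ (hLip.mono fun _ => And.left)
      hlinLip.lipschitzOnWith fun T hT => (hfree T hT).1).congr_right hcontact,
    tendstoUniformlyOn_Icc_of_lipschitzOnWith ht₀ (hLip.mono fun _ => And.right)
      (LipschitzWith.const 0).lipschitzOnWith fun T hT => (hfree T hT).2⟩

/-- Theorem 3.2(i): for `ḣ₀ < 0`, as `μ → 0⁺`, `h_μ → H` and `ξ_μ → 0`
uniformly on `[0, t₀]`, where `H(t) = max{0, h₀ + ḣ₀ t}` and `t₀ = −h₀/ḣ₀`. -/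
theorem no_physical_rebound_before_contact
    (a h0 hd0 c α : ℝ) (b : ℝ → ℝ) (D : ℝ → ℝ → ℝ)
    (h ξ : ℝ → ℝ → ℝ)
    (ha : 0 < a) (hh0 : 0 < h0) (hhd0 : hd0 < 0)
    (hb0 : b 0 = 0)
    (hB1 : HypB1 b) (hB2 : HypB2 b)
    (hDpos : HypDpos D) (hD1 : HypD1 D) (hD2 : HypD2 D c α)
    (hsol : ∀ μ : ℝ, 0 < μ →
      IsGlobalSolution a μ b D h0 hd0 0 0 (h μ) (ξ μ)) :
    TendstoUniformlyOn (fun μ t => h μ t) (fun t => max 0 (h0 + hd0 * t))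
      (nhdsWithin 0 (Set.Ioi 0)) (Set.Icc 0 (-h0 / hd0)) ∧
    TendstoUniformlyOn (fun μ t => ξ μ t) (fun _ => 0)
      (nhdsWithin 0 (Set.Ioi 0)) (Set.Icc 0 (-h0 / hd0)) :=
  no_physical_rebound_before_contact_general a h0 hd0 b D h ξ ha hh0 hhd0 hb0 hB1 hB2 hDpos hD1 hsol
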